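/- Let S be a numerical semigroup with multiplicity m. Then there exists a smallest MED numerical semigroup containing S with multiplicity m; namely, the intersection of all MED numerical semigroups T with S ⊆ T and m(T) = m is itself a MED numerical semigroup with multiplicity m containing S. -/

import Mathlib

/-!
Every MED numerical semigroup `T ⊇ S` with `m(T) = m(S)` lies inside the ordinary semigroup
`{0} ∪ [m(S), ∞)`, which is itself such a semigroup. Hence the intersection `C` of all of them is
sandwiched between `S` and the ordinary semigroup, both of multiplicity `m(S)`, so `m(C) = m(S)`;
and `m(S)` stays an Arf element in an intersection of semigroups in which it is Arf.
-/

/-- A numerical semigroup: an additive submonoid of ℕ with finite complement. -/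
structure NumSgp where
  carrier : Set ℕ
  zero_mem : 0 ∈ carrier
  add_mem : ∀ ⦃a b : ℕ⦄, a ∈ carrier → b ∈ carrier → a + b ∈ carrier
  cofinite : carrierᶜ.Finite

/-- The multiplicity: the smallest nonzero element. -/
noncomputable def NumSgp.mult (S : NumSgp) : ℕ := sInf {n | n ∈ S.carrier ∧ n ≠ 0}

/-- The Apéry set of `S` with respect to `s`: elements `x ∈ S` with `x - s ∉ S`
(over the integers, i.e. there is no `y ∈ S` with `y + s = x`). -/
def NumSgp.Ap (S : NumSgp) (s : ℕ) : Set ℕ :=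
  {x | x ∈ S.carrier ∧ ∀ y ∈ S.carrier, y + s ≠ x}

/-- `z` is an Arf element of `S`. -/
def NumSgp.ArfElem (S : NumSgp) (z : ℕ) : Prop :=
  ∀ x ∈ S.carrier, ∀ y ∈ S.carrier, z ≤ x → z ≤ y → x + y - z ∈ S.carrier

/-- The minimal generating set: nonzero elements not expressible as a sum of two
nonzero elements of `S`. -/
def NumSgp.minGen (S : NumSgp) : Set ℕ :=
  {x | x ∈ S.carrier ∧ x ≠ 0 ∧ ∀ a ∈ S.carrier, ∀ b ∈ S.carrier, a ≠ 0 → b ≠ 0 → a + b ≠ x}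

/-- The embedding dimension: the cardinality of the minimal generating set. -/
noncomputable def NumSgp.edim (S : NumSgp) : ℕ := S.minGen.ncard

/-- The Frobenius number: the largest gap. -/
noncomputable def NumSgp.frob (S : NumSgp) : ℕ := sSup S.carrierᶜ

/-- The conductor: the smallest `c` with `c + ℤ≥0 ⊆ S`. -/
noncomputable def NumSgp.cond (S : NumSgp) : ℕ := sInf {c | ∀ n, c ≤ n → n ∈ S.carrier}

/-- The genus: the number of gaps. -/
noncomputable def NumSgp.genus (S : NumSgp) : ℕ := S.carrierᶜ.ncard

/-- The set of pseudo-Frobenius numbers. -/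
def NumSgp.PF (S : NumSgp) : Set ℕ :=
  {x | x ∉ S.carrier ∧ ∀ s ∈ S.carrier, s ≠ 0 → x + s ∈ S.carrier}

/-- The type of `S`: the number of pseudo-Frobenius numbers. -/
noncomputable def NumSgp.type (S : NumSgp) : ℕ := S.PF.ncard

/-- `S` is a MED semigroup: its multiplicity is an Arf element, i.e. for all
`x, y ∈ S` with `x, y ≥ m(S)`, `x + y - m(S) ∈ S`. -/
def NumSgp.IsMED (S : NumSgp) : Prop := S.ArfElem S.mult

/-- The MED closure of `S`: the intersection of all MED numerical semigroups
containing `S` with the same multiplicity. -/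
def NumSgp.MEDclosure (S : NumSgp) : Set ℕ :=
  ⋂ T ∈ {T : NumSgp | S.carrier ⊆ T.carrier ∧ T.mult = S.mult ∧ T.IsMED}, T.carrier

namespace NumSgp

lemma mult_mem_and_ne_zero (S : NumSgp) : S.mult ∈ S.carrier ∧ S.mult ≠ 0 := by
  obtain ⟨n, hn, hn0⟩ := (compl_compl S.carrier ▸ S.cofinite.infinite_compl).exists_gt 0
  exact Nat.sInf_mem (s := {n | n ∈ S.carrier ∧ n ≠ 0}) ⟨n, hn, hn0.ne'⟩

lemma mult_mem (S : NumSgp) : S.mult ∈ S.carrier := S.mult_mem_and_ne_zero.1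

lemma mult_ne_zero (S : NumSgp) : S.mult ≠ 0 := S.mult_mem_and_ne_zero.2

lemma mult_le {S : NumSgp} {x : ℕ} (hx : x ∈ S.carrier) (hx0 : x ≠ 0) : S.mult ≤ x :=
  Nat.sInf_le ⟨hx, hx0⟩

lemma mult_le_of_subset {S T : NumSgp} (h : S.carrier ⊆ T.carrier) : T.mult ≤ S.mult :=
  mult_le (h S.mult_mem) S.mult_ne_zero

def ordinary (m : ℕ) : NumSgp where
  carrier := {n | n = 0 ∨ m ≤ n}
  zero_mem := Or.inl rfl
  add_mem a b ha hb := by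
    simp only [Set.mem_ofPred_eq] at *
    omega
  cofinite := (Set.finite_Iio m).subset fun n hn => by
    simp only [Set.mem_compl_iff, Set.mem_ofPred_eq, not_or, not_le] at hn
    exact hn.2

lemma ordinary_mult {m : ℕ} (hm : m ≠ 0) : (ordinary m).mult = m := by
  refine le_antisymm (mult_le (Or.inr le_rfl) hm) ?_
  rcases (ordinary m).mult_mem with h | h
  · exact absurd h (ordinary m).mult_ne_zero
  · exact h

lemma arfElem_ordinary (m : ℕ) : (ordinary m).ArfElem m :=
  fun _ _ _ _ hx hy => Or.inr (by omega)

lemma isMED_ordinary {m : ℕ} (hm : m ≠ 0) : (ordinary m).IsMED := by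
  rw [IsMED, ordinary_mult hm]
  exact arfElem_ordinary m

lemma subset_ordinary_mult (S : NumSgp) : S.carrier ⊆ (ordinary S.mult).carrier := fun x hx =>
  (eq_or_ne x 0).imp id (mult_le hx)

/-- Containing `S` is what keeps the complement of the intersection finite. -/
def biInter (F : Set NumSgp) (S : NumSgp) (hS : ∀ T ∈ F, S.carrier ⊆ T.carrier) : NumSgp where
  carrier := ⋂ T ∈ F, T.carrier
  zero_mem := Set.mem_iInter₂.2 fun T _ => T.zero_mem
  add_mem _ _ ha hb := Set.mem_iInter₂.2 fun T hT =>
    T.add_mem (Set.mem_iInter₂.1 ha T hT) (Set.mem_iInter₂.1 hb T hT)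
  cofinite := S.cofinite.subset (Set.compl_subset_compl.2 (Set.subset_iInter₂ hS))

section biInter

variable {F : Set NumSgp} {S : NumSgp} {hS : ∀ T ∈ F, S.carrier ⊆ T.carrier}

lemma subset_biInter : S.carrier ⊆ (biInter F S hS).carrier := Set.subset_iInter₂ hS

lemma biInter_subset {T : NumSgp} (hT : T ∈ F) : (biInter F S hS).carrier ⊆ T.carrier :=
  Set.biInter_subset_of_mem hT

lemma arfElem_biInter {z : ℕ} (hz : ∀ T ∈ F, T.ArfElem z) : (biInter F S hS).ArfElem z :=
  fun x hx y hy hzx hzy => Set.mem_iInter₂.2 fun T hT =>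
    hz T hT x (biInter_subset hT hx) y (biInter_subset hT hy) hzx hzy

end biInter

end NumSgp

open NumSgp in
theorem med_closure_exists (S : NumSgp) :
    ∃ S0 : NumSgp,
      S0.carrier = (⋂ T ∈ {T : NumSgp | S.carrier ⊆ T.carrier ∧ T.mult = S.mult ∧ T.IsMED},
        T.carrier) ∧
      S.carrier ⊆ S0.carrier ∧ S0.mult = S.mult ∧ S0.IsMED ∧
      ∀ T : NumSgp, S.carrier ⊆ T.carrier → T.mult = S.mult → T.IsMED →
        S0.carrier ⊆ T.carrier := by
  set F := {T : NumSgp | S.carrier ⊆ T.carrier ∧ T.mult = S.mult ∧ T.IsMED}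
  have hS : ∀ T ∈ F, S.carrier ⊆ T.carrier := fun T hT => hT.1
  have hord : ordinary S.mult ∈ F :=
    ⟨subset_ordinary_mult S, ordinary_mult S.mult_ne_zero, isMED_ordinary S.mult_ne_zero⟩
  set C := biInter F S hS
  have hmult : C.mult = S.mult := by
    refine le_antisymm (mult_le_of_subset subset_biInter) ?_
    calc S.mult = (ordinary S.mult).mult := (ordinary_mult S.mult_ne_zero).symm
      _ ≤ C.mult := mult_le_of_subset (biInter_subset hord)
  have hMED : C.IsMED := by
    rw [IsMED, hmult]
    exact arfElem_biInter fun T hT => hT.2.1 ▸ hT.2.2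
  exact ⟨C, rfl, subset_biInter, hmult, hMED,
    fun T hST hmT hMEDT => biInter_subset ⟨hST, hmT, hMEDT⟩⟩
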